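/- (Deterministic core of Theorem on feature selection via randomized sampling.) Let A ∈ ℝ^{m×n}, let Z ∈ ℝ^{n×k} with ZᵀZ = I_k, and set E = A − A Z Zᵀ. Let 𝒳 be a nonempty finite set of matrices X ∈ ℝ^{m×k} each with XᵀX = I_k, let X_opt ∈ 𝒳 minimize ‖A − X Xᵀ A‖_F over 𝒳, and write F_opt = ‖A − X_opt X_optᵀ A‖_F². Let 0 < ε < 1/3, γ ≥ 1, and let Ω ∈ ℝ^{n×r}, S ∈ ℝ^{r×r} be matrices satisfying: (i) ‖E‖_F² ≤ (1 + 100 ε) F_opt; (ii) ‖A Z Zᵀ − A Ω S (Zᵀ Ω S)⁺ Zᵀ‖_F ≤ 16 ε ‖E‖_F; (iii) ‖(Zᵀ Ω S)⁺‖₂² ≤ 1/(1 − ε); (iv) ‖(I_m − X_opt X_optᵀ) A Ω S‖_F² ≤ (4/3) F_opt. If X̂ ∈ 𝒳 satisfies ‖A Ω S − X̂ X̂ᵀ A Ω S‖_F² ≤ γ · min_{X ∈ 𝒳} ‖A Ω S − X Xᵀ A Ω S‖_F², then ‖A − X̂ X̂ᵀ A‖_F² ≤ (1 + (2 + 4000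 ε) γ) F_opt. -/
import Mathlib


open Matrix

/-- Squared Frobenius norm of a real matrix. -/
noncomputable def frobSq {m n : ℕ} (M : Matrix (Fin m) (Fin n) ℝ) : ℝ :=
  ∑ i, ∑ j, (M i j) ^ 2

/-- The Frobenius norm of a real matrix. -/
noncomputable def frobNorm {m n : ℕ} (M : Matrix (Fin m) (Fin n) ℝ) : ℝ :=
  Real.sqrt (frobSq M)

/-- The spectral norm of a real matrix: the supremum of ‖Mx‖₂ over unit vectors x. -/
noncomputable def specNorm {m n : ℕ} (M : Matrix (Fin m) (Fin n) ℝ) : ℝ :=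
  sSup {c : ℝ | ∃ x : Fin n → ℝ, (∑ j, (x j) ^ 2) = 1 ∧
    c = Real.sqrt (∑ i, (∑ j, M i j * x j) ^ 2)}

lemma frobSq_nonneg {m n : ℕ} (M : Matrix (Fin m) (Fin n) ℝ) : 0 ≤ frobSq M :=
  Finset.sum_nonneg fun _ _ => Finset.sum_nonneg fun _ _ => sq_nonneg _

lemma frobNorm_nonneg {m n : ℕ} (M : Matrix (Fin m) (Fin n) ℝ) : 0 ≤ frobNorm M :=
  Real.sqrt_nonneg _

lemma frobNorm_sq {m n : ℕ} (M : Matrix (Fin m) (Fin n) ℝ) : frobNorm M ^ 2 = frobSq M :=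
  Real.sq_sqrt (frobSq_nonneg M)

lemma frobNorm_mono {m n : ℕ} {M N : Matrix (Fin m) (Fin n) ℝ} (h : frobSq M ≤ frobSq N) :
    frobNorm M ≤ frobNorm N := Real.sqrt_le_sqrt h

lemma frobSq_eq_trace {m n : ℕ} (M : Matrix (Fin m) (Fin n) ℝ) :
    frobSq M = (M * Mᵀ).trace := by
  simp [frobSq, Matrix.trace, Matrix.mul_apply, Matrix.diag, sq]

lemma frobSq_eq_trace' {m n : ℕ} (M : Matrix (Fin m) (Fin n) ℝ) :
    frobSq M = (Mᵀ * M).trace := by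
  rw [frobSq_eq_trace, Matrix.trace_mul_comm]

lemma frobSq_add {m n : ℕ} (M N : Matrix (Fin m) (Fin n) ℝ) :
    frobSq (M + N) = frobSq M + 2 * (∑ i, ∑ j, M i j * N i j) + frobSq N := by
  simp only [frobSq, Matrix.add_apply, Finset.mul_sum]
  rw [← Finset.sum_add_distrib, ← Finset.sum_add_distrib]
  refine Finset.sum_congr rfl fun i _ => ?_
  rw [← Finset.sum_add_distrib, ← Finset.sum_add_distrib]
  exact Finset.sum_congr rfl fun j _ => by ring

lemma frobSq_add_of_orth {m n : ℕ} {M N : Matrix (Fin m) (Fin n) ℝ} (h : M * Nᵀ = 0) :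
    frobSq (M + N) = frobSq M + frobSq N := by
  have hin : (∑ i, ∑ j, M i j * N i j) = 0 := by
    refine Finset.sum_eq_zero fun i _ => ?_
    have := congrFun (congrFun h i) i
    simpa [Matrix.mul_apply, Matrix.transpose_apply] using this
  rw [frobSq_add, hin]; ring

lemma frobNorm_add_le {m n : ℕ} (M N : Matrix (Fin m) (Fin n) ℝ) :
    frobNorm (M + N) ≤ frobNorm M + frobNorm N := by
  have hc : (∑ i, ∑ j, M i j * N i j) ≤ frobNorm M * frobNorm N := by
    have h2 := Finset.sum_mul_sq_le_sq_mul_sq Finset.univ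
      (fun p : Fin m × Fin n => M p.1 p.2) (fun p : Fin m × Fin n => N p.1 p.2)
    rw [Fintype.sum_prod_type, Fintype.sum_prod_type, Fintype.sum_prod_type] at h2
    have h3 : (∑ i, ∑ j, M i j * N i j) ≤ |∑ i, ∑ j, M i j * N i j| := le_abs_self _
    have h4 : |∑ i, ∑ j, M i j * N i j| = Real.sqrt ((∑ i, ∑ j, M i j * N i j) ^ 2) :=
      (Real.sqrt_sq_eq_abs _).symm
    calc (∑ i, ∑ j, M i j * N i j) ≤ Real.sqrt ((∑ i, ∑ j, M i j * N i j) ^ 2) := by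
          rw [← h4]; exact h3
      _ ≤ Real.sqrt (frobSq M * frobSq N) := Real.sqrt_le_sqrt h2
      _ = frobNorm M * frobNorm N := Real.sqrt_mul (frobSq_nonneg M) _
  have key : frobSq (M + N) ≤ (frobNorm M + frobNorm N) ^ 2 := by
    rw [frobSq_add]
    have hM := frobNorm_sq M; have hN := frobNorm_sq N
    nlinarith [hc]
  have := Real.sqrt_le_sqrt key
  rwa [Real.sqrt_sq (add_nonneg (frobNorm_nonneg M) (frobNorm_nonneg N))] at this

lemma frobSq_mul_orthT {n k p : ℕ} {Z : Matrix (Fin n) (Fin k) ℝ} (hZ : Zᵀ * Z = 1)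
    (M : Matrix (Fin p) (Fin k) ℝ) : frobSq (M * Zᵀ) = frobSq M := by
  rw [frobSq_eq_trace, frobSq_eq_trace]
  congr 1
  rw [Matrix.transpose_mul, Matrix.transpose_transpose, Matrix.mul_assoc,
    ← Matrix.mul_assoc Zᵀ Z Mᵀ, hZ, Matrix.one_mul]

lemma frobSq_proj_le {m k p : ℕ} (X : Matrix (Fin m) (Fin k) ℝ) (hX : Xᵀ * X = 1)
    (M : Matrix (Fin m) (Fin p) ℝ) : frobSq ((1 - X * Xᵀ) * M) ≤ frobSq M := by
  have hX' : ∀ {q : ℕ} (Y : Matrix (Fin k) (Fin q) ℝ), Xᵀ * (X * Y) = Y := fun Y => by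
    rw [← Matrix.mul_assoc, hX, Matrix.one_mul]
  have hproj : ((1 - X * Xᵀ) * M)ᵀ * ((1 - X * Xᵀ) * M) = Mᵀ * M - (Xᵀ * M)ᵀ * (Xᵀ * M) := by
    simp only [Matrix.transpose_mul, Matrix.transpose_sub, Matrix.transpose_one,
      Matrix.transpose_transpose, Matrix.sub_mul, Matrix.mul_sub, Matrix.one_mul,
      Matrix.mul_one, Matrix.mul_assoc, hX']
    abel
  rw [frobSq_eq_trace', hproj, Matrix.trace_sub]
  have : (0:ℝ) ≤ ((Xᵀ * M)ᵀ * (Xᵀ * M)).trace := by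
    rw [← frobSq_eq_trace']; exact frobSq_nonneg _
  rw [← frobSq_eq_trace']
  linarith [frobSq_nonneg M]
lemma specSet_bddAbove {r k : ℕ} (P : Matrix (Fin r) (Fin k) ℝ) :
    BddAbove {c : ℝ | ∃ x : Fin k → ℝ, (∑ j, (x j) ^ 2) = 1 ∧
      c = Real.sqrt (∑ i, (∑ j, P i j * x j) ^ 2)} := by
  refine ⟨Real.sqrt (frobSq P), ?_⟩
  rintro c ⟨x, hx, rfl⟩
  apply Real.sqrt_le_sqrt
  calc ∑ i, (∑ j, P i j * x j) ^ 2
      ≤ ∑ i, ((∑ j, (P i j) ^ 2) * ∑ j, (x j) ^ 2) :=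
        Finset.sum_le_sum fun i _ => Finset.sum_mul_sq_le_sq_mul_sq _ _ _
    _ = frobSq P := by rw [frobSq]; refine Finset.sum_congr rfl fun i _ => ?_; rw [hx, mul_one]

lemma specNorm_nonneg {r k : ℕ} (hk : 0 < k) (P : Matrix (Fin r) (Fin k) ℝ) :
    0 ≤ specNorm P := by
  set x : Fin k → ℝ := fun j => if j = ⟨0, hk⟩ then 1 else 0 with hxdef
  have hx : (∑ j, (x j) ^ 2) = 1 := by
    simp [hxdef, apply_ite (· ^ 2)]
  have hmem : Real.sqrt (∑ i, (∑ j, P i j * x j) ^ 2) ∈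
      {c : ℝ | ∃ x : Fin k → ℝ, (∑ j, (x j) ^ 2) = 1 ∧
      c = Real.sqrt (∑ i, (∑ j, P i j * x j) ^ 2)} := ⟨x, hx, rfl⟩
  exact le_trans (Real.sqrt_nonneg _) (le_csSup (specSet_bddAbove P) hmem)

lemma spec_apply {r k : ℕ} (hk : 0 < k) (P : Matrix (Fin r) (Fin k) ℝ) (x : Fin k → ℝ) :
    ∑ i, (∑ j, P i j * x j) ^ 2 ≤ specNorm P ^ 2 * ∑ j, (x j) ^ 2 := by
  rcases eq_or_lt_of_le (Finset.sum_nonneg fun j _ => sq_nonneg (x j)) with h0 | h0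
  · have hx0 : ∀ j, x j = 0 := by
      intro j
      have := (Finset.sum_eq_zero_iff_of_nonneg (fun j _ => sq_nonneg (x j))).mp h0.symm j
        (Finset.mem_univ j)
      exact pow_eq_zero_iff two_ne_zero |>.mp this
    simp [hx0]
  · set c : ℝ := Real.sqrt (∑ j, (x j) ^ 2) with hcdef
    have hc : 0 < c := Real.sqrt_pos.mpr h0
    have hc2 : c ^ 2 = ∑ j, (x j) ^ 2 := Real.sq_sqrt h0.le
    set y : Fin k → ℝ := fun j => x j / c with hydef
    have hy : (∑ j, (y j) ^ 2) = 1 := by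
      simp only [hydef, div_pow]
      rw [← Finset.sum_div, ← hc2, div_self (by positivity)]
    have hmem : Real.sqrt (∑ i, (∑ j, P i j * y j) ^ 2) ≤ specNorm P :=
      le_csSup (specSet_bddAbove P) ⟨y, hy, rfl⟩
    have hsq : ∑ i, (∑ j, P i j * y j) ^ 2 ≤ specNorm P ^ 2 := by
      have h1 : (0:ℝ) ≤ ∑ i, (∑ j, P i j * y j) ^ 2 :=
        Finset.sum_nonneg fun _ _ => sq_nonneg _
      calc ∑ i, (∑ j, P i j * y j) ^ 2
          = Real.sqrt (∑ i, (∑ j, P i j * y j) ^ 2) ^ 2 := (Real.sq_sqrt h1).symm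
        _ ≤ specNorm P ^ 2 := by
            have h2 := Real.sqrt_nonneg (∑ i, (∑ j, P i j * y j) ^ 2)
            nlinarith [hmem]
    have hPy : ∀ i, (∑ j, P i j * y j) = (∑ j, P i j * x j) / c := by
      intro i
      rw [Finset.sum_div]
      exact Finset.sum_congr rfl fun j _ => by rw [hydef]; ring
    have hsum : ∑ i, (∑ j, P i j * y j) ^ 2 = (∑ i, (∑ j, P i j * x j) ^ 2) / c ^ 2 := by
      rw [Finset.sum_div]
      exact Finset.sum_congr rfl fun i _ => by rw [hPy i, div_pow]
    rw [hsum] at hsq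
    rw [← hc2]
    calc ∑ i, (∑ j, P i j * x j) ^ 2
        = ((∑ i, (∑ j, P i j * x j) ^ 2) / c ^ 2) * c ^ 2 := by field_simp
      _ ≤ specNorm P ^ 2 * c ^ 2 := by nlinarith [hsq, sq_nonneg c]

lemma spec_apply_t {r k : ℕ} (hk : 0 < k) (P : Matrix (Fin r) (Fin k) ℝ) (x : Fin r → ℝ) :
    ∑ j, (∑ i, P i j * x i) ^ 2 ≤ specNorm P ^ 2 * ∑ i, (x i) ^ 2 := by
  set y : Fin k → ℝ := fun j => ∑ i, P i j * x i with hydef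
  set L : ℝ := ∑ j, (y j) ^ 2 with hLdef
  have hL0 : 0 ≤ L := Finset.sum_nonneg fun _ _ => sq_nonneg _
  have hswap : L = ∑ i, x i * (∑ j, P i j * y j) := by
    calc L = ∑ j, (∑ i, P i j * x i) * y j := Finset.sum_congr rfl fun j _ => by
            rw [hydef]; ring
      _ = ∑ j, ∑ i, P i j * x i * y j := Finset.sum_congr rfl fun j _ => by
            rw [Finset.sum_mul]
      _ = ∑ i, ∑ j, P i j * x i * y j := Finset.sum_comm
      _ = ∑ i, x i * (∑ j, P i j * y j) := Finset.sum_congr rfl fun i _ => by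
            rw [Finset.mul_sum]; exact Finset.sum_congr rfl fun j _ => by ring
  have hCS : (∑ i, x i * (∑ j, P i j * y j)) ^ 2
      ≤ (∑ i, (x i) ^ 2) * ∑ i, (∑ j, P i j * y j) ^ 2 :=
    Finset.sum_mul_sq_le_sq_mul_sq _ _ _
  have hPy : ∑ i, (∑ j, P i j * y j) ^ 2 ≤ specNorm P ^ 2 * L := spec_apply hk P y
  have hx2 : (0:ℝ) ≤ ∑ i, (x i) ^ 2 := Finset.sum_nonneg fun _ _ => sq_nonneg _
  have hkey : L ^ 2 ≤ (∑ i, (x i) ^ 2) * (specNorm P ^ 2 * L) := by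
    calc L ^ 2 = (∑ i, x i * (∑ j, P i j * y j)) ^ 2 := by rw [← hswap]
      _ ≤ (∑ i, (x i) ^ 2) * ∑ i, (∑ j, P i j * y j) ^ 2 := hCS
      _ ≤ (∑ i, (x i) ^ 2) * (specNorm P ^ 2 * L) := by
          apply mul_le_mul_of_nonneg_left hPy hx2
  rcases eq_or_lt_of_le hL0 with h | h
  · rw [← h]; positivity
  · nlinarith [hkey, h]

lemma frobSq_mul_le {m r k : ℕ} (hk : 0 < k) (N : Matrix (Fin m) (Fin r) ℝ)
    (P : Matrix (Fin r) (Fin k) ℝ) : frobSq (N * P) ≤ specNorm P ^ 2 * frobSq N := by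
  calc frobSq (N * P) = ∑ i, ∑ j, (∑ l, P l j * N i l) ^ 2 := by
        simp only [frobSq, Matrix.mul_apply]
        exact Finset.sum_congr rfl fun i _ => Finset.sum_congr rfl fun j _ => by
          rw [Finset.sum_congr rfl fun l _ => (mul_comm (N i l) (P l j))]
    _ ≤ ∑ i, (specNorm P ^ 2 * ∑ l, (N i l) ^ 2) :=
        Finset.sum_le_sum fun i _ => spec_apply_t hk P (fun l => N i l)
    _ = specNorm P ^ 2 * frobSq N := by rw [frobSq, Finset.mul_sum]

set_option maxHeartbeats 1000000 in
lemma kmeans_arith (ε γ F e t d : ℝ) (hε0 : 0 < ε) (hε1 : ε < 1/3) (hγ : 1 ≤ γ)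
    (hF0 : 0 ≤ F) (he0 : 0 ≤ e) (ht0 : 0 ≤ t) (hd0 : 0 ≤ d)
    (hF1 : e ^ 2 ≤ (1 + 100 * ε) * F) (ht : t ≤ 16 * ε * e)
    (hd2' : (1 - ε) * d ^ 2 ≤ γ * ((4/3) * F)) :
    (t + d) ^ 2 + e ^ 2 ≤ (1 + (2 + 4000 * ε) * γ) * F := by
  have hεF : 0 ≤ ε * F := mul_nonneg hε0.le hF0
  have hεγF : ε * F ≤ ε * γ * F := by
    nlinarith [mul_nonneg (by linarith : (0:ℝ) ≤ γ - 1) hεF]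
  have hεγF0 : 0 ≤ ε * γ * F := by nlinarith [hεγF, hεF]
  have he2' : e ^ 2 ≤ (103/3) * F := by
    nlinarith [mul_nonneg (by linarith : (0:ℝ) ≤ 1/3 - ε) hF0]
  have hd2'' : d ^ 2 ≤ 2 * γ * F := by
    nlinarith [mul_nonneg (by linarith : (0:ℝ) ≤ 1/3 - ε) (sq_nonneg d)]
  have ht2 : t ^ 2 ≤ 2930 * (ε * γ * F) := by
    have h1 : t * t ≤ (16 * ε * e) * (16 * ε * e) := mul_self_le_mul_self ht0 ht
    have h2 : ε^2 * e^2 ≤ ε^2 * ((103/3) * F) := mul_le_mul_of_nonneg_left he2' (sq_nonneg ε)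
    have h3 : ε^2 * F ≤ (1/3) * (ε * F) := by
      nlinarith [mul_nonneg (mul_nonneg (by linarith : (0:ℝ) ≤ 1/3 - ε) hε0.le) hF0]
    nlinarith [h1, h2, h3, hεγF, hεF]
  have htd : 2 * (t * d) ≤ 4 * (ε * e^2) + 64 * (ε * d^2) := by
    nlinarith [mul_le_mul_of_nonneg_right ht hd0,
      mul_nonneg hε0.le (sq_nonneg (e - 4*d))]
  have hεe2 : ε * e^2 ≤ (103/3) * (ε * γ * F) := by
    nlinarith [mul_le_mul_of_nonneg_left he2' hε0.le, hεγF]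
  have hεd2 : ε * d^2 ≤ 2 * (ε * γ * F) := by
    nlinarith [mul_le_mul_of_nonneg_left hd2'' hε0.le]
  nlinarith [ht2, htd, hεe2, hεd2, hd2'', hF1, hεγF, hεγF0, hεF]

set_option maxHeartbeats 1000000 in
/-- Deterministic core of the feature selection (randomized sampling) theorem: under
the stated conditions on the sampling and rescaling matrices Ω and S, a γ-approximate
k-means solution X̂ computed on the selected features A Ω S satisfies
‖A − X̂ X̂ᵀ A‖_F² ≤ (1 + (2 + 4000 ε) γ) F_opt. -/
theorem feature_selection_kmeans {m n k r : ℕ}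
    (A : Matrix (Fin m) (Fin n) ℝ)
    (Z : Matrix (Fin n) (Fin k) ℝ) (hZ : Zᵀ * Z = 1)
    (𝒳 : Finset (Matrix (Fin m) (Fin k) ℝ)) (hne : 𝒳.Nonempty)
    (horth : ∀ X ∈ 𝒳, Xᵀ * X = 1)
    (Xopt : Matrix (Fin m) (Fin k) ℝ) (hXopt : Xopt ∈ 𝒳)
    (hXoptMin : ∀ X ∈ 𝒳,
      frobSq (A - Xopt * Xoptᵀ * A) ≤ frobSq (A - X * Xᵀ * A))
    (ε γ : ℝ) (hε0 : 0 < ε) (hε1 : ε < 1 / 3) (hγ : 1 ≤ γ)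
    (W : Matrix (Fin n) (Fin r) ℝ) (S : Matrix (Fin r) (Fin r) ℝ)
    (P : Matrix (Fin r) (Fin k) ℝ)
    (hp1 : (Zᵀ * W * S) * P * (Zᵀ * W * S) = Zᵀ * W * S)
    (hp2 : P * (Zᵀ * W * S) * P = P)
    (hp3 : ((Zᵀ * W * S) * P)ᵀ = (Zᵀ * W * S) * P)
    (hp4 : (P * (Zᵀ * W * S))ᵀ = P * (Zᵀ * W * S))
    (hE : frobSq (A - A * Z * Zᵀ)
      ≤ (1 + 100 * ε) * frobSq (A - Xopt * Xoptᵀ * A))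
    (hEtilde : frobNorm (A * Z * Zᵀ - A * W * S * P * Zᵀ)
      ≤ 16 * ε * frobNorm (A - A * Z * Zᵀ))
    (hPnorm : specNorm P ^ 2 ≤ 1 / (1 - ε))
    (hAWS : frobSq ((1 - Xopt * Xoptᵀ) * (A * W * S))
      ≤ (4 / 3) * frobSq (A - Xopt * Xoptᵀ * A))
    (Xhat : Matrix (Fin m) (Fin k) ℝ) (hXhat : Xhat ∈ 𝒳)
    (happrox : frobSq (A * W * S - Xhat * Xhatᵀ * (A * W * S)) ≤
      γ * 𝒳.inf' hne (fun X => frobSq (A * W * S - X * Xᵀ * (A * W * S)))) :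
    frobSq (A - Xhat * Xhatᵀ * A) ≤
      (1 + (2 + 4000 * ε) * γ) * frobSq (A - Xopt * Xoptᵀ * A) := by
  rcases Nat.eq_zero_or_pos k with hk | hk
  · subst hk
    have hz : ∀ (X : Matrix (Fin m) (Fin 0) ℝ), X * Xᵀ = 0 := fun X => by
      ext i j; simp [Matrix.mul_apply]
    rw [hz Xhat, hz Xopt, Matrix.zero_mul, sub_zero]
    have h1 : (1:ℝ) ≤ 1 + (2 + 4000 * ε) * γ := by nlinarith
    nlinarith [frobSq_nonneg A]
  have hXh := horth Xhat hXhat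
  have hF0 : (0:ℝ) ≤ frobSq (A - Xopt * Xoptᵀ * A) := frobSq_nonneg _
  set F := frobSq (A - Xopt * Xoptᵀ * A) with hFdef
  have hBE : (A * Z * Zᵀ) * (A - A * Z * Zᵀ)ᵀ = 0 := by
    have h1 : ∀ {p : ℕ} (Y : Matrix (Fin k) (Fin p) ℝ), Zᵀ * (Z * Y) = Y := fun Y => by
      rw [← Matrix.mul_assoc, hZ, Matrix.one_mul]
    rw [Matrix.transpose_sub, Matrix.mul_sub]
    simp only [Matrix.transpose_mul, Matrix.transpose_transpose, Matrix.mul_assoc, h1]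
    simp
  have hsplit : A - Xhat * Xhatᵀ * A
      = (1 - Xhat * Xhatᵀ) * (A * Z * Zᵀ) + (1 - Xhat * Xhatᵀ) * (A - A * Z * Zᵀ) := by
    rw [← Matrix.mul_add]
    have hA : (A * Z * Zᵀ) + (A - A * Z * Zᵀ) = A := by abel
    rw [hA, Matrix.sub_mul, Matrix.one_mul]
  have horthprod : ((1 - Xhat * Xhatᵀ) * (A * Z * Zᵀ)) *
      ((1 - Xhat * Xhatᵀ) * (A - A * Z * Zᵀ))ᵀ = 0 := by
    rw [Matrix.transpose_mul, ← Matrix.mul_assoc,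
      Matrix.mul_assoc (1 - Xhat * Xhatᵀ) (A * Z * Zᵀ) _, hBE,
      Matrix.mul_zero, Matrix.zero_mul]
  have hpyth : frobSq (A - Xhat * Xhatᵀ * A)
      = frobSq ((1 - Xhat * Xhatᵀ) * (A * Z * Zᵀ))
        + frobSq ((1 - Xhat * Xhatᵀ) * (A - A * Z * Zᵀ)) := by
    rw [hsplit]; exact frobSq_add_of_orth horthprod
  have hEc : frobSq ((1 - Xhat * Xhatᵀ) * (A - A * Z * Zᵀ)) ≤ frobSq (A - A * Z * Zᵀ) :=
    frobSq_proj_le Xhat hXh _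
  set t := frobNorm (A * Z * Zᵀ - A * W * S * P * Zᵀ) with htdef
  set d := frobNorm ((1 - Xhat * Xhatᵀ) * (A * W * S) * P * Zᵀ) with hddef
  set e := frobNorm (A - A * Z * Zᵀ) with hedef
  have ht0 : 0 ≤ t := frobNorm_nonneg _
  have hd0 : 0 ≤ d := frobNorm_nonneg _
  have he0 : 0 ≤ e := frobNorm_nonneg _
  have he2 : e ^ 2 = frobSq (A - A * Z * Zᵀ) := frobNorm_sq _
  have ht : t ≤ 16 * ε * e := hEtilde
  have hBtri : frobNorm ((1 - Xhat * Xhatᵀ) * (A * Z * Zᵀ)) ≤ t + d := by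
    have hdecomp : (1 - Xhat * Xhatᵀ) * (A * Z * Zᵀ)
        = (1 - Xhat * Xhatᵀ) * (A * Z * Zᵀ - A * W * S * P * Zᵀ)
          + (1 - Xhat * Xhatᵀ) * (A * W * S) * P * Zᵀ := by
      rw [Matrix.mul_sub]
      rw [show (1 - Xhat * Xhatᵀ) * (A * W * S * P * Zᵀ)
          = (1 - Xhat * Xhatᵀ) * (A * W * S) * P * Zᵀ from by
        simp only [Matrix.mul_assoc]]
      abel
    calc frobNorm ((1 - Xhat * Xhatᵀ) * (A * Z * Zᵀ))
        = frobNorm ((1 - Xhat * Xhatᵀ) * (A * Z * Zᵀ - A * W * S * P * Zᵀ)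
          + (1 - Xhat * Xhatᵀ) * (A * W * S) * P * Zᵀ) := by rw [← hdecomp]
      _ ≤ frobNorm ((1 - Xhat * Xhatᵀ) * (A * Z * Zᵀ - A * W * S * P * Zᵀ))
          + frobNorm ((1 - Xhat * Xhatᵀ) * (A * W * S) * P * Zᵀ) := frobNorm_add_le _ _
      _ ≤ t + d := by
          refine add_le_add ?_ le_rfl
          exact frobNorm_mono (frobSq_proj_le Xhat hXh _)
  have hBsq : frobSq ((1 - Xhat * Xhatᵀ) * (A * Z * Zᵀ)) ≤ (t + d) ^ 2 := by
    have h1 : frobNorm ((1 - Xhat * Xhatᵀ) * (A * Z * Zᵀ)) ^ 2 ≤ (t + d) ^ 2 :=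
      pow_le_pow_left₀ (frobNorm_nonneg _) hBtri 2
    rwa [frobNorm_sq] at h1
  have hdZ : d ^ 2 = frobSq ((1 - Xhat * Xhatᵀ) * (A * W * S) * P) := by
    rw [hddef, frobNorm_sq, frobSq_mul_orthT hZ]
  have hC : frobSq ((1 - Xhat * Xhatᵀ) * (A * W * S)) ≤ γ * ((4/3) * F) := by
    have hinf : 𝒳.inf' hne (fun X => frobSq (A * W * S - X * Xᵀ * (A * W * S)))
        ≤ frobSq (A * W * S - Xopt * Xoptᵀ * (A * W * S)) :=
      Finset.inf'_le _ hXopt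
    have heq1 : (1 - Xhat * Xhatᵀ) * (A * W * S)
        = A * W * S - Xhat * Xhatᵀ * (A * W * S) := by
      rw [Matrix.sub_mul, Matrix.one_mul]
    have heq2 : A * W * S - Xopt * Xoptᵀ * (A * W * S)
        = (1 - Xopt * Xoptᵀ) * (A * W * S) := by
      rw [Matrix.sub_mul, Matrix.one_mul]
    rw [heq1]
    calc frobSq (A * W * S - Xhat * Xhatᵀ * (A * W * S))
        ≤ γ * 𝒳.inf' hne (fun X => frobSq (A * W * S - X * Xᵀ * (A * W * S))) := happrox
      _ ≤ γ * frobSq (A * W * S - Xopt * Xoptᵀ * (A * W * S)) :=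
          mul_le_mul_of_nonneg_left hinf (by linarith)
      _ = γ * frobSq ((1 - Xopt * Xoptᵀ) * (A * W * S)) := by rw [heq2]
      _ ≤ γ * ((4/3) * F) := mul_le_mul_of_nonneg_left hAWS (by linarith)
  have h1ε : (0:ℝ) < 1 - ε := by linarith
  have hd2 : d ^ 2 ≤ (1 / (1 - ε)) * (γ * ((4/3) * F)) := by
    rw [hdZ]
    calc frobSq ((1 - Xhat * Xhatᵀ) * (A * W * S) * P)
        ≤ specNorm P ^ 2 * frobSq ((1 - Xhat * Xhatᵀ) * (A * W * S)) := frobSq_mul_le hk _ P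
      _ ≤ (1 / (1 - ε)) * (γ * ((4/3) * F)) :=
          mul_le_mul hPnorm hC (frobSq_nonneg _) (by positivity)
  have hd2' : (1 - ε) * d ^ 2 ≤ γ * ((4/3) * F) := by
    have h := mul_le_mul_of_nonneg_left hd2 h1ε.le
    rwa [← mul_assoc, mul_one_div, div_self h1ε.ne', one_mul] at h
  have hmain : frobSq (A - Xhat * Xhatᵀ * A) ≤ (t + d) ^ 2 + e ^ 2 := by
    rw [hpyth, he2]; linarith [hBsq, hEc]
  have hF1 : e ^ 2 ≤ (1 + 100 * ε) * F := by rw [he2]; exact hE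
  calc frobSq (A - Xhat * Xhatᵀ * A) ≤ (t + d) ^ 2 + e ^ 2 := hmain
    _ ≤ (1 + (2 + 4000 * ε) * γ) * F :=
      kmeans_arith ε γ F e t d hε0 hε1 hγ hF0 he0 ht0 hd0 hF1 ht hd2'
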